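/- Let X ∈ ℝ^{d×n}, λ > 0, μ > 0, 0 < p, q < 2, and let (Z_t)_{t≥1} be a sequence in ℝ^{n×n} such that for every t, p·Z_{t+1}M_t + λq·Xᵀ(XZ_{t+1} − X)N_t = 0, where M_t = (Z_tᵀZ_t + μ²I)^{p/2−1} and N_t is the diagonal matrix with (N_t)_{ii} = (‖(XZ_t − X)_i‖_2² + μ²)^{q/2−1}. Then for every t, ‖Z_t‖_{S_p}^p ≤ Tr((Z_tᵀZ_t + μ²I)^{p/2}) ≤ J(Z_t, μ) ≤ J(Z_1, μ); consequently the sequence (Z_t) is bounded. -/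

import Mathlib

open Matrix

/-- Real power of a real symmetric matrix, defined through the spectral decomposition
`A = U · diag(λ₁,…,λₙ) · Uᵀ` as `A^r = U · diag(λ₁^r,…,λₙ^r) · Uᵀ`
(junk value `0` if `A` is not symmetric). -/
noncomputable def mpow {n : ℕ} (A : Matrix (Fin n) (Fin n) ℝ) (r : ℝ) :
    Matrix (Fin n) (Fin n) ℝ :=
  if hA : A.IsHermitian then hA.cfc (fun x : ℝ => x ^ r) else 0

/-- The smoothed LRR objective
`J(Z, μ) = Tr((ZᵀZ + μ²I)^{p/2}) + λ·∑ᵢ (‖(XZ − X)ᵢ‖₂² + μ²)^{q/2}`,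
where `(XZ − X)ᵢ` denotes the `i`-th column of `XZ − X`. -/
noncomputable def smoothJ {d n : ℕ} (X : Matrix (Fin d) (Fin n) ℝ) (lam p q : ℝ)
    (Z : Matrix (Fin n) (Fin n) ℝ) (μ : ℝ) : ℝ :=
  (mpow (Zᵀ * Z + μ ^ 2 • (1 : Matrix (Fin n) (Fin n) ℝ)) (p / 2)).trace +
    lam * ∑ i, (∑ j, ((X * Z - X) j i) ^ 2 + μ ^ 2) ^ (q / 2)

/-!
For `0 ≤ r ≤ 1` the concave power satisfies the tangent-line bound
`b ^ r ≤ a ^ r + r a ^ (r - 1) (b - a)`, and it lifts to traces,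
`Tr B ^ r ≤ Tr A ^ r + r Tr (A ^ (r - 1) (B - A))`, because the squared overlaps of two orthonormal
eigenbases form a doubly stochastic matrix. Applied at `Z_t` to both terms of `J`, and with
`YᵀY - Y'ᵀY' = -2 (Y' - Y)ᵀY - (Y' - Y)ᵀ(Y' - Y)`, this bounds `J(Z_{t+1})` by `J(Z_t)` minus a
linear term, which is the update equation paired with `Z_t - Z_{t+1}` and so vanishes, minus a
nonnegative quadratic term. Finally `Tr ((ZᵀZ + μ²I) ^ (p/2)) ≤ J(Z_0)` bounds every eigenvalue of
`ZᵀZ + μ²I`, hence its trace, which dominates every `Z i j ^ 2`.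
-/

lemma Matrix.hadamard_self_mem_doublyStochastic {ι : Type*} [Fintype ι] [DecidableEq ι]
    {P : Matrix ι ι ℝ} (hP : P ∈ unitaryGroup ι ℝ) : P ⊙ P ∈ doublyStochastic ℝ ι := by
  rw [mem_doublyStochastic_iff_sum]
  refine ⟨fun i j => mul_self_nonneg _, fun i => ?_, fun j => ?_⟩
  · simpa [mul_apply, one_apply] using congrFun (congrFun (mem_unitaryGroup_iff.mp hP) i) i
  · simpa [mul_apply, one_apply] using congrFun (congrFun (mem_unitaryGroup_iff'.mp hP) j) j

namespace Matrix.IsHermitian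

variable {ι : Type*} [Fintype ι] [DecidableEq ι] {A B : Matrix ι ι ℝ}

lemma cfc_eq_mul_diagonal_mul (hA : A.IsHermitian) (f : ℝ → ℝ) :
    hA.cfc f = (hA.eigenvectorUnitary : Matrix ι ι ℝ) * diagonal (f ∘ hA.eigenvalues) *
      star (hA.eigenvectorUnitary : Matrix ι ι ℝ) :=
  rfl

lemma cfc_self (hA : A.IsHermitian) : hA.cfc (fun x => x) = A := by
  rw [← cfc_eq hA]
  exact cfc_id' ℝ A

lemma cfc_mul_cfc (hA : A.IsHermitian) (f g : ℝ → ℝ) :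
    hA.cfc f * hA.cfc g = hA.cfc (fun x => f x * g x) := by
  have := A.finite_real_spectrum
  rw [← cfc_eq hA, ← cfc_eq hA, ← cfc_eq hA]
  exact (cfc_mul f g A (this.continuousOn f) (this.continuousOn g)).symm

lemma trace_cfc (hA : A.IsHermitian) (f : ℝ → ℝ) :
    (hA.cfc f).trace = ∑ i, f (hA.eigenvalues i) := by
  rw [cfc_eq_mul_diagonal_mul, trace_mul_cycle, Unitary.coe_star_mul_self, one_mul,
    trace_diagonal]
  rfl

lemma posSemidef_cfc (hA : A.IsHermitian) {f : ℝ → ℝ} (hf : ∀ i, 0 ≤ f (hA.eigenvalues i)) :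
    (hA.cfc f).PosSemidef := by
  rw [cfc_eq_mul_diagonal_mul, star_eq_conjTranspose]
  exact (PosSemidef.diagonal fun i => hf i).mul_mul_conjTranspose_same _

lemma exists_doublyStochastic_trace_cfc_mul_cfc (hA : A.IsHermitian) (hB : B.IsHermitian) :
    ∃ C ∈ doublyStochastic ℝ ι, ∀ f g : ℝ → ℝ, (hA.cfc f * hB.cfc g).trace =
      ∑ i, ∑ j, C i j * (f (hA.eigenvalues i) * g (hB.eigenvalues j)) := by
  set U := (hA.eigenvectorUnitary : Matrix ι ι ℝ)
  set V := (hB.eigenvectorUnitary : Matrix ι ι ℝ)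
  have hP : star U * V ∈ unitaryGroup ι ℝ :=
    (star hA.eigenvectorUnitary * hB.eigenvectorUnitary).2
  refine ⟨(star U * V) ⊙ (star U * V), hadamard_self_mem_doublyStochastic hP, fun f g => ?_⟩
  calc (hA.cfc f * hB.cfc g).trace
      = (diagonal (f ∘ hA.eigenvalues) * (star U * V) * diagonal (g ∘ hB.eigenvalues) *
          star (star U * V)).trace := by
        rw [cfc_eq_mul_diagonal_mul, cfc_eq_mul_diagonal_mul, star_mul, star_star]
        simp only [Matrix.mul_assoc]
        rw [trace_mul_comm]
        simp only [Matrix.mul_assoc]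
        rfl
    _ = _ := by
        refine Finset.sum_congr rfl fun i _ => ?_
        rw [diag_apply, mul_apply]
        refine Finset.sum_congr rfl fun j _ => ?_
        rw [mul_diagonal, diagonal_mul, star_apply, hadamard_apply]
        simp only [Function.comp_apply, star_trivial]
        ring

theorem trace_cfc_le_of_le_tangent (hA : A.IsHermitian) (hB : B.IsHermitian) {f g : ℝ → ℝ}
    (h : ∀ i j, f (hB.eigenvalues j) ≤
      f (hA.eigenvalues i) + g (hA.eigenvalues i) * (hB.eigenvalues j - hA.eigenvalues i)) :
    (hB.cfc f).trace ≤ (hA.cfc f).trace + (hA.cfc g * (B - A)).trace := by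
  obtain ⟨C, hC, htrace⟩ := exists_doublyStochastic_trace_cfc_mul_cfc hA hB
  set a := hA.eigenvalues
  set b := hB.eigenvalues
  have hrow (v : ι → ℝ) : ∑ i, v i = ∑ i, ∑ j, C i j * v i := by
    simp [← Finset.sum_mul, sum_row_of_mem_doublyStochastic hC]
  have hcol (v : ι → ℝ) : ∑ j, v j = ∑ i, ∑ j, C i j * v j := by
    rw [Finset.sum_comm]
    simp [← Finset.sum_mul, sum_col_of_mem_doublyStochastic hC]
  have hB' : (hB.cfc f).trace = ∑ i, ∑ j, C i j * f (b j) := by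
    rw [trace_cfc, hcol]
  have hA' : (hA.cfc f).trace = ∑ i, ∑ j, C i j * f (a i) := by
    rw [trace_cfc, hrow]
  have hG : (hA.cfc g * (B - A)).trace = ∑ i, ∑ j, C i j * (g (a i) * (b j - a i)) := by
    have hgB : (hA.cfc g * B).trace = ∑ i, ∑ j, C i j * (g (a i) * b j) := by
      simpa only [hB.cfc_self] using htrace g fun x => x
    have hgA : (hA.cfc g * A).trace = ∑ i, ∑ j, C i j * (g (a i) * a i) := by
      calc (hA.cfc g * A).trace = (hA.cfc g * hA.cfc fun x => x).trace := by rw [hA.cfc_self]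
        _ = _ := by rw [cfc_mul_cfc, trace_cfc, hrow]
    simp only [trace_sub, hgB, hgA, ← Finset.sum_sub_distrib, mul_sub]
  rw [hB', hA', hG, ← Finset.sum_add_distrib]
  refine Finset.sum_le_sum fun i _ => ?_
  rw [← Finset.sum_add_distrib]
  refine Finset.sum_le_sum fun j _ => ?_
  rw [← mul_add]
  exact mul_le_mul_of_nonneg_left (h i j) (nonneg_of_mem_doublyStochastic hC)

end Matrix.IsHermitian

lemma Real.rpow_le_tangent_line {a b r : ℝ} (ha : 0 < a) (hb : 0 ≤ b) (hr0 : 0 ≤ r)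
    (hr1 : r ≤ 1) : b ^ r ≤ a ^ r + r * a ^ (r - 1) * (b - a) := by
  have hamgm : a ^ (1 - r) * b ^ r ≤ (1 - r) * a + r * b :=
    Real.geom_mean_le_arith_mean2_weighted (by linarith) hr0 ha.le hb (by ring)
  have hcancel : a ^ (r - 1) * a ^ (1 - r) = 1 := by
    rw [← Real.rpow_add ha, sub_add_sub_cancel', sub_self, Real.rpow_zero]
  have hpow : a ^ (r - 1) * a = a ^ r := by
    rw [← Real.rpow_add_one ha.ne', sub_add_cancel]
  calc b ^ r = a ^ (r - 1) * (a ^ (1 - r) * b ^ r) := by rw [← mul_assoc, hcancel, one_mul]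
    _ ≤ a ^ (r - 1) * ((1 - r) * a + r * b) := by gcongr
    _ = a ^ r + r * a ^ (r - 1) * (b - a) := by rw [← hpow]; ring

section mpow

variable {n : ℕ} {A B : Matrix (Fin n) (Fin n) ℝ} {r c : ℝ}

lemma mpow_of_isHermitian (hA : A.IsHermitian) (r : ℝ) : mpow A r = hA.cfc (· ^ r) :=
  dif_pos hA

lemma posSemidef_mpow (hA : A.PosSemidef) (r : ℝ) : (mpow A r).PosSemidef := by
  rw [mpow_of_isHermitian hA.1]
  exact hA.1.posSemidef_cfc fun i => Real.rpow_nonneg (hA.eigenvalues_nonneg i) r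

lemma trace_mpow_le_add_trace_mpow_mul_sub (hA : A.PosDef) (hB : B.PosSemidef) (hr0 : 0 ≤ r)
    (hr1 : r ≤ 1) :
    (mpow B r).trace ≤ (mpow A r).trace + r * (mpow A (r - 1) * (B - A)).trace := by
  have hcont : ContinuousOn (· ^ (r - 1)) (spectrum ℝ A) := A.finite_real_spectrum.continuousOn _
  have hscale : r * (mpow A (r - 1) * (B - A)).trace
      = (hA.1.cfc (fun x => r * x ^ (r - 1)) * (B - A)).trace := by
    rw [mpow_of_isHermitian hA.1, ← hA.1.cfc_eq, ← hA.1.cfc_eq, cfc_const_mul r _ A hcont,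
      smul_mul_assoc, trace_smul, smul_eq_mul]
  rw [mpow_of_isHermitian hA.1, mpow_of_isHermitian hB.1, hscale]
  refine hA.1.trace_cfc_le_of_le_tangent hB.1 fun i j => ?_
  simpa only [mul_assoc] using Real.rpow_le_tangent_line (hA.eigenvalues_pos i)
    (hB.eigenvalues_nonneg j) hr0 hr1

lemma posDef_add_smul_one (hB : B.PosSemidef) (hc : 0 < c) : (B + c • 1).PosDef :=
  PosDef.posSemidef_add hB (PosDef.one.smul hc)

lemma trace_mpow_le_trace_mpow_add_smul_one (hB : B.PosSemidef) (hc : 0 < c) (hr0 : 0 ≤ r)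
    (hr1 : r ≤ 1) : (mpow B r).trace ≤ (mpow (B + c • 1) r).trace := by
  have hA := posDef_add_smul_one hB hc
  have h := trace_mpow_le_add_trace_mpow_mul_sub hA hB hr0 hr1
  have hM := (posSemidef_mpow hA.posSemidef (r - 1)).trace_nonneg
  rw [sub_add_cancel_left, Matrix.mul_neg, mul_smul_comm, Matrix.mul_one, trace_neg,
    trace_smul, smul_eq_mul] at h
  linarith [mul_nonneg hr0 (mul_nonneg hc.le hM)]

end mpow

section gram

variable {m ι : Type*} [Fintype m] [Fintype ι] {M : Matrix ι ι ℝ}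

lemma posSemidef_transpose_mul_self (Z : Matrix m ι ℝ) : (Zᵀ * Z).PosSemidef := by
  simpa only [conjTranspose_eq_transpose_of_trivial] using posSemidef_conjTranspose_mul_self Z

lemma sq_le_trace_transpose_mul_self (Z : Matrix m ι ℝ) (i : m) (j : ι) :
    Z i j ^ 2 ≤ (Zᵀ * Z).trace := by
  have htrace : (Zᵀ * Z).trace = ∑ l, ∑ k, Z k l ^ 2 := by
    simp only [trace, diag, mul_apply, transpose_apply, sq]
  rw [htrace]
  calc Z i j ^ 2 ≤ ∑ k, Z k j ^ 2 :=
        Finset.single_le_sum (fun k _ => sq_nonneg (Z k j)) (Finset.mem_univ i)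
    _ ≤ _ := Finset.single_le_sum (f := fun l => ∑ k, Z k l ^ 2)
        (fun l _ => Finset.sum_nonneg fun k _ => sq_nonneg (Z k l)) (Finset.mem_univ j)

lemma trace_transpose_mul_self_mul_nonneg (hM : M.PosSemidef) (D : Matrix m ι ℝ) :
    0 ≤ (Dᵀ * D * M).trace := by
  have h := (hM.mul_mul_conjTranspose_same D).trace_nonneg
  rwa [conjTranspose_eq_transpose_of_trivial, trace_mul_cycle] at h

lemma trace_transpose_mul_self_mul_sub_le (hM : M.PosSemidef) (Y Y' : Matrix m ι ℝ) :
    (Yᵀ * Y * M).trace - (Y'ᵀ * Y' * M).trace ≤ -2 * ((Y' - Y)ᵀ * (Y * M)).trace := by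
  set D := Y' - Y
  have hMt : Mᵀ = M := by rw [← conjTranspose_eq_transpose_of_trivial, hM.1]
  have hsymm : (Yᵀ * D * M).trace = (Dᵀ * (Y * M)).trace := by
    rw [← trace_transpose, transpose_mul, transpose_mul, transpose_transpose, hMt,
      trace_mul_comm, Matrix.mul_assoc]
  have hexpand : Y'ᵀ * Y' * M = Yᵀ * Y * M + Yᵀ * D * M + Dᵀ * (Y * M) + Dᵀ * D * M := by
    rw [show Y' = Y + D by simp [D], transpose_add]
    simp only [Matrix.add_mul, Matrix.mul_add, Matrix.mul_assoc]
    abel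
  rw [hexpand, trace_add, trace_add, trace_add, hsymm]
  linarith [trace_transpose_mul_self_mul_nonneg hM D]

variable [DecidableEq ι]

lemma trace_transpose_mul_self_mul_diagonal (E : Matrix m ι ℝ) (ν : ι → ℝ) :
    (Eᵀ * E * diagonal ν).trace = ∑ i, (∑ j, E j i ^ 2) * ν i := by
  simp only [trace, diag, mul_diagonal]
  simp only [mul_apply, transpose_apply, sq]

end gram

section majorize

variable {m : Type*} [Fintype m] {n : ℕ} {r c : ℝ}

lemma trace_mpow_gram_add_smul_one_le (Zc Zp : Matrix m (Fin n) ℝ) (hc : 0 < c) (hr0 : 0 ≤ r)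
    (hr1 : r ≤ 1) :
    (mpow (Zpᵀ * Zp + c • 1) r).trace ≤ (mpow (Zcᵀ * Zc + c • 1) r).trace
      - 2 * r * ((Zc - Zp)ᵀ * (Zp * mpow (Zcᵀ * Zc + c • 1) (r - 1))).trace := by
  set Ac := Zcᵀ * Zc + c • (1 : Matrix (Fin n) (Fin n) ℝ)
  set M := mpow Ac (r - 1)
  have hAc := posDef_add_smul_one (posSemidef_transpose_mul_self Zc) hc
  have hAp := posDef_add_smul_one (posSemidef_transpose_mul_self Zp) hc
  have htangent := trace_mpow_le_add_trace_mpow_mul_sub hAc hAp.posSemidef hr0 hr1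
  have hdiff : (M * (Zpᵀ * Zp + c • 1 - Ac)).trace
      = (Zpᵀ * Zp * M).trace - (Zcᵀ * Zc * M).trace := by
    rw [add_sub_add_right_eq_sub, Matrix.mul_sub, trace_sub, trace_mul_comm M,
      trace_mul_comm M]
  have hquad := trace_transpose_mul_self_mul_sub_le (posSemidef_mpow hAc.posSemidef (r - 1)) Zp Zc
  rw [hdiff] at htangent
  linarith [mul_le_mul_of_nonneg_left hquad hr0]

variable {ι : Type*} [Fintype ι] [DecidableEq ι]

lemma sum_rpow_colNormSq_add_le (Ec Ep : Matrix m ι ℝ) (hc : 0 < c) (hr0 : 0 ≤ r)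
    (hr1 : r ≤ 1) :
    ∑ i, (∑ j, Ep j i ^ 2 + c) ^ r ≤ ∑ i, (∑ j, Ec j i ^ 2 + c) ^ r
      - 2 * r * ((Ec - Ep)ᵀ * (Ep * diagonal fun i => (∑ j, Ec j i ^ 2 + c) ^ (r - 1))).trace := by
  set sc := fun i => ∑ j, Ec j i ^ 2
  set sp := fun i => ∑ j, Ep j i ^ 2
  set ν := fun i => (sc i + c) ^ (r - 1)
  have hsc (i : ι) : 0 ≤ sc i := Finset.sum_nonneg fun j _ => sq_nonneg _
  have hsp (i : ι) : 0 ≤ sp i := Finset.sum_nonneg fun j _ => sq_nonneg _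
  have hN : (diagonal ν).PosSemidef :=
    PosSemidef.diagonal fun i => Real.rpow_nonneg (by linarith [hsc i]) _
  have htangent (i : ι) : (sp i + c) ^ r ≤ (sc i + c) ^ r + r * ν i * (sp i - sc i) := by
    simpa only [add_sub_add_right_eq_sub] using
      Real.rpow_le_tangent_line (a := sc i + c) (b := sp i + c) (by linarith [hsc i])
        (by linarith [hsp i]) hr0 hr1
  have hdiff : ∑ i, ν i * (sp i - sc i)
      = (Epᵀ * Ep * diagonal ν).trace - (Ecᵀ * Ec * diagonal ν).trace := by
    rw [trace_transpose_mul_self_mul_diagonal, trace_transpose_mul_self_mul_diagonal,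
      ← Finset.sum_sub_distrib]
    exact Finset.sum_congr rfl fun i _ => by ring
  have hquad := trace_transpose_mul_self_mul_sub_le hN Ep Ec
  calc ∑ i, (sp i + c) ^ r ≤ ∑ i, ((sc i + c) ^ r + r * ν i * (sp i - sc i)) :=
        Finset.sum_le_sum fun i _ => htangent i
    _ = ∑ i, (sc i + c) ^ r + r * ∑ i, ν i * (sp i - sc i) := by
        rw [Finset.sum_add_distrib, Finset.mul_sum]
        simp only [mul_assoc]
    _ ≤ _ := by
        rw [hdiff]
        linarith [mul_le_mul_of_nonneg_left hquad hr0]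

end majorize

section bound

variable {n : ℕ} {A : Matrix (Fin n) (Fin n) ℝ} {r c : ℝ}

lemma trace_le_card_mul_trace_mpow_rpow_inv (hA : A.PosSemidef) (hr : 0 < r) :
    A.trace ≤ n * (mpow A r).trace ^ r⁻¹ := by
  set a := hA.1.eigenvalues
  have ha : ∀ i, 0 ≤ a i := hA.eigenvalues_nonneg
  have htrace : (mpow A r).trace = ∑ i, a i ^ r := by
    rw [mpow_of_isHermitian hA.1, hA.1.trace_cfc]
  have hle (i : Fin n) : a i ≤ (mpow A r).trace ^ r⁻¹ :=
    calc a i = (a i ^ r) ^ r⁻¹ := (Real.rpow_rpow_inv (ha i) hr.ne').symm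
      _ ≤ _ := by
        rw [htrace]
        exact Real.rpow_le_rpow (Real.rpow_nonneg (ha i) r)
          (Finset.single_le_sum (fun j _ => Real.rpow_nonneg (ha j) r) (Finset.mem_univ i))
          (inv_nonneg.2 hr.le)
  calc A.trace = ∑ i, a i := by
        conv_lhs => rw [← hA.1.cfc_self]
        exact hA.1.trace_cfc _
    _ ≤ ∑ _i : Fin n, (mpow A r).trace ^ r⁻¹ := Finset.sum_le_sum fun i _ => hle i
    _ = _ := by simp

lemma sq_le_card_mul_of_trace_mpow_le {m : Type*} [Fintype m] (Z : Matrix m (Fin n) ℝ)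
    (hc : 0 ≤ c) (hr : 0 < r) {K : ℝ} (hK : (mpow (Zᵀ * Z + c • 1) r).trace ≤ K) (i : m)
    (j : Fin n) : Z i j ^ 2 ≤ n * K ^ r⁻¹ := by
  have hA : (Zᵀ * Z + c • 1).PosSemidef :=
    (posSemidef_transpose_mul_self Z).add (PosSemidef.one.smul hc)
  calc Z i j ^ 2 ≤ (Zᵀ * Z).trace := sq_le_trace_transpose_mul_self Z i j
    _ ≤ (Zᵀ * Z + c • 1).trace := by
        rw [trace_add, trace_smul, trace_one, smul_eq_mul]
        have : (0 : ℝ) ≤ c * Fintype.card (Fin n) := by positivity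
        linarith
    _ ≤ n * (mpow (Zᵀ * Z + c • 1) r).trace ^ r⁻¹ := trace_le_card_mul_trace_mpow_rpow_inv hA hr
    _ ≤ n * K ^ r⁻¹ := by
        gcongr
        exact (posSemidef_mpow hA r).trace_nonneg

end bound

section objective

variable {d n : ℕ} (X : Matrix (Fin d) (Fin n) ℝ) {lam p q μ : ℝ}

lemma trace_mpow_le_smoothJ (hlam : 0 ≤ lam) (Z : Matrix (Fin n) (Fin n) ℝ) :
    (mpow (Zᵀ * Z + μ ^ 2 • (1 : Matrix (Fin n) (Fin n) ℝ)) (p / 2)).trace ≤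
      smoothJ X lam p q Z μ :=
  le_add_of_nonneg_right <| mul_nonneg hlam <| Finset.sum_nonneg fun i _ =>
    Real.rpow_nonneg (by positivity) _

lemma smoothJ_le_of_update (hlam : 0 ≤ lam) (hμ : μ ≠ 0) (hp0 : 0 ≤ p) (hp2 : p ≤ 2)
    (hq0 : 0 ≤ q) (hq2 : q ≤ 2) (Zc Zp : Matrix (Fin n) (Fin n) ℝ)
    (hupd : p • (Zp * mpow (Zcᵀ * Zc + μ ^ 2 • (1 : Matrix (Fin n) (Fin n) ℝ)) (p / 2 - 1)) +
      (lam * q) • (Xᵀ * ((X * Zp - X) *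
        diagonal fun i => (∑ j, ((X * Zc - X) j i) ^ 2 + μ ^ 2) ^ (q / 2 - 1))) = 0) :
    smoothJ X lam p q Zp μ ≤ smoothJ X lam p q Zc μ := by
  have hc : 0 < μ ^ 2 := by positivity
  have hP := trace_mpow_gram_add_smul_one_le Zc Zp hc (r := p / 2) (by linarith) (by linarith)
  have hQ := sum_rpow_colNormSq_add_le (X * Zc - X) (X * Zp - X) hc (r := q / 2)
    (by linarith) (by linarith)
  rw [sub_sub_sub_cancel_right, ← Matrix.mul_sub, transpose_mul, Matrix.mul_assoc] at hQ
  have hcross := congrArg (fun G => ((Zc - Zp)ᵀ * G).trace) hupd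
  simp only [Matrix.mul_add, Matrix.mul_smul, trace_add, trace_smul, smul_eq_mul,
    Matrix.mul_zero, trace_zero] at hcross
  unfold smoothJ
  linarith [mul_le_mul_of_nonneg_left hQ hlam]

end objective

/-- **Theorem 3 (2): boundedness.** If the sequence `(Z_t)` satisfies the IRLS update equation
`p·Z_{t+1}·M_t + λq·Xᵀ(XZ_{t+1} − X)·N_t = 0` for every `t`, then for every `t`
`‖Z_t‖_{S_p}^p = Tr((Z_tᵀZ_t)^{p/2}) ≤ Tr((Z_tᵀZ_t + μ²I)^{p/2}) ≤ J(Z_t, μ) ≤ J(Z_1, μ)`,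
and consequently the sequence `(Z_t)` is bounded (entrywise, by some constant `C`). -/
theorem stmt_13 {d n : ℕ} (X : Matrix (Fin d) (Fin n) ℝ) (lam p q μ : ℝ)
    (hlam : 0 < lam) (hμ : 0 < μ) (hp0 : 0 < p) (hp2 : p < 2) (hq0 : 0 < q) (hq2 : q < 2)
    (Z : ℕ → Matrix (Fin n) (Fin n) ℝ)
    (hupd : ∀ t, p • (Z (t + 1) *
        mpow ((Z t)ᵀ * Z t + μ ^ 2 • (1 : Matrix (Fin n) (Fin n) ℝ)) (p / 2 - 1)) +
      (lam * q) • (Xᵀ * ((X * Z (t + 1) - X) *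
        Matrix.diagonal fun i => (∑ j, ((X * Z t - X) j i) ^ 2 + μ ^ 2) ^ (q / 2 - 1))) = 0) :
    (∀ t, (mpow ((Z t)ᵀ * Z t) (p / 2)).trace ≤
          (mpow ((Z t)ᵀ * Z t + μ ^ 2 • (1 : Matrix (Fin n) (Fin n) ℝ)) (p / 2)).trace ∧
        (mpow ((Z t)ᵀ * Z t + μ ^ 2 • (1 : Matrix (Fin n) (Fin n) ℝ)) (p / 2)).trace ≤
          smoothJ X lam p q (Z t) μ ∧
        smoothJ X lam p q (Z t) μ ≤ smoothJ X lam p q (Z 0) μ) ∧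
      ∃ C : ℝ, ∀ t, ∀ i j, |Z t i j| ≤ C := by
  have hJ_anti : Antitone fun t => smoothJ X lam p q (Z t) μ :=
    antitone_nat_of_succ_le fun t => smoothJ_le_of_update X hlam.le hμ.ne' hp0.le hp2.le hq0.le
      hq2.le (Z t) (Z (t + 1)) (hupd t)
  have hJ_le (t : ℕ) : smoothJ X lam p q (Z t) μ ≤ smoothJ X lam p q (Z 0) μ :=
    hJ_anti (Nat.zero_le t)
  have hsmooth (t : ℕ) := trace_mpow_le_smoothJ X (p := p) (q := q) (μ := μ) hlam.le (Z t)
  refine ⟨fun t => ⟨?_, hsmooth t, hJ_le t⟩,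
    √(n * smoothJ X lam p q (Z 0) μ ^ (p / 2)⁻¹), fun t i j => Real.abs_le_sqrt ?_⟩
  · exact trace_mpow_le_trace_mpow_add_smul_one (posSemidef_transpose_mul_self (Z t))
      (by positivity) (by linarith) (by linarith)
  · exact sq_le_card_mul_of_trace_mpow_le (Z t) (by positivity) (by linarith)
      ((hsmooth t).trans (hJ_le t)) i j
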